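/- arXiv:2011.14374 — 5 statements merged into one kernel-verified Lean document; each statement's English description precedes it below -/
import Mathlib

section
/- Let a ∈ L¹_loc([0,∞); ℂ) and let P, P_* be the solutions of the Krein system with coefficient a. Then for all λ, μ ∈ ℂ and all r ≥ 0 the Christoffel–Darboux formula holds: P(r,λ) conj(P(r,μ)) − P_*(r,λ) conj(P_*(r,μ)) = i(λ − conj(μ)) ∫₀^r P(s,λ) conj(P(s,μ)) ds. In particular, taking μ = λ, one has |P_*(r,λ)|² = |P(r,λ)|² + 2 Im(λ) ∫₀^r |P(s,λ)|² ds. -/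
/-!
Functions of the form `u = c + ∫ₐ U` with `U` merely integrable still obey the product rule
`u v = c d + ∫ₐ (U v + u V)`: expanding `u` and `v` reduces it to Fubini on the triangle
`t ≤ s`. Applied to `P(·,λ) conj P(·,μ) - P_*(·,λ) conj P_*(·,μ)`, the terms carrying the
coefficient `a` cancel and only `i (λ - conj μ) P(·,λ) conj P(·,μ)` survives; for `μ = λ` the
factor is `-2 Im λ`.
-/

open MeasureTheory Filter

noncomputable section

/-- A Krein system with coefficient `a ∈ L¹_loc([0,∞); ℂ)`, in integral form:
`P` and `Ps` (= `P_*`) are locally absolutely continuous in `r` and satisfy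
`∂P/∂r = iλP - conj(a)P_*`, `P(0,λ)=1` and `∂P_*/∂r = -aP`, `P_*(0,λ)=1`. -/
def IsKreinSystem (a : ℝ → ℂ) (P Ps : ℝ → ℂ → ℂ) : Prop :=
  MeasureTheory.LocallyIntegrableOn a (Set.Ici 0) ∧
  (∀ z : ℂ, ContinuousOn (fun r => P r z) (Set.Ici 0)) ∧
  (∀ z : ℂ, ContinuousOn (fun r => Ps r z) (Set.Ici 0)) ∧
  ∀ z : ℂ, ∀ r : ℝ, 0 ≤ r →
    (P r z = 1 + ∫ s in (0:ℝ)..r,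
        (Complex.I * z * P s z - (starRingEnd ℂ) (a s) * Ps s z)) ∧
    (Ps r z = 1 - ∫ s in (0:ℝ)..r, a s * P s z)

open Set intervalIntegral ComplexConjugate

section

variable {𝕜 : Type*} [RCLike 𝕜] {μ : Measure ℝ}

theorem IntervalIntegrable.conj {f : ℝ → 𝕜} {a b : ℝ}
    (hf : IntervalIntegrable f μ a b) :
    IntervalIntegrable (fun x => conj (f x)) μ a b :=
  ⟨(RCLike.conjCLE : 𝕜 ≃L[ℝ] 𝕜).toContinuousLinearMap.integrable_comp hf.1,
    (RCLike.conjCLE : 𝕜 ≃L[ℝ] 𝕜).toContinuousLinearMap.integrable_comp hf.2⟩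

theorem MeasureTheory.LocallyIntegrableOn.intervalIntegrable {E : Type*}
    [NormedAddCommGroup E] {f : ℝ → E} {s : Set ℝ} {a b : ℝ}
    (hf : LocallyIntegrableOn f s μ) (hab : uIcc a b ⊆ s) : IntervalIntegrable f μ a b :=
  (hf.integrableOn_compact_subset hab isCompact_uIcc).intervalIntegrable

theorem integral_mul_primitive_add_integral_primitive_mul [NullSingletonClass μ] [SFinite μ]
    {U V : ℝ → 𝕜} {a b : ℝ} (hab : a ≤ b)
    (hU : IntervalIntegrable U μ a b) (hV : IntervalIntegrable V μ a b) :
    (∫ s in a..b, U s * (∫ t in a..s, V t ∂μ) ∂μ) +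
        ∫ s in a..b, (∫ t in a..s, U t ∂μ) * V s ∂μ
      = (∫ s in a..b, U s ∂μ) * ∫ s in a..b, V s ∂μ := by
  let F : ℝ × ℝ → 𝕜 := {p | p.2 ≤ p.1}.indicator fun p => U p.1 * V p.2
  have hF : Integrable F ((μ.restrict (Ioc a b)).prod (μ.restrict (Ioc a b))) :=
    (hU.1.mul_prod hV.1).indicator (measurableSet_le measurable_snd measurable_fst)
  have inner_left : ∀ x ∈ Ioc a b,
      ∫ y in Ioc a b, F (x, y) ∂μ = U x * ∫ t in a..x, V t ∂μ := by
    intro x hx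
    have : (fun y => F (x, y)) = (Iic x).indicator (fun y => U x * V y) := by
      ext y; simp [F, indicator_apply]
    rw [this, setIntegral_indicator measurableSet_Iic, Ioc_inter_Iic, min_eq_right hx.2,
      MeasureTheory.integral_const_mul, integral_of_le hx.1.le]
  have inner_right : ∀ y ∈ Ioc a b,
      ∫ x in Ioc a b, F (x, y) ∂μ =
        ((∫ s in a..b, U s ∂μ) - ∫ s in a..y, U s ∂μ) * V y := by
    intro y hy
    have : (fun x => F (x, y)) = (Ici y).indicator (fun x => U x * V y) := by
      ext x; simp [F, indicator_apply]
    have hIcc : Ioc a b ∩ Ici y = Icc y b := by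
      ext x
      simp only [mem_inter_iff, mem_Ioc, mem_Ici, mem_Icc]
      exact ⟨fun ⟨⟨_, hxb⟩, hyx⟩ => ⟨hyx, hxb⟩,
        fun ⟨hyx, hxb⟩ => ⟨⟨hy.1.trans_le hyx, hxb⟩, hyx⟩⟩
    rw [this, setIntegral_indicator measurableSet_Ici, hIcc, integral_Icc_eq_integral_Ioc,
      MeasureTheory.integral_mul_const, ← integral_of_le hy.2,
      integral_interval_sub_left hU (hU.mono_set (uIcc_subset_uIcc_left (by
        rw [uIcc_of_le hab]; exact Ioc_subset_Icc_self hy)))]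
  have swap := integral_integral_swap (f := fun x y => F (x, y)) hF
  rw [setIntegral_congr_fun measurableSet_Ioc inner_left,
    setIntegral_congr_fun measurableSet_Ioc inner_right, ← integral_of_le hab,
    ← integral_of_le hab] at swap
  have cU := continuousOn_primitive_interval' hU left_mem_uIcc
  have hrest : IntervalIntegrable
      (fun s => ((∫ t in a..b, U t ∂μ) - ∫ t in a..s, U t ∂μ) * V s) μ a b :=
    hV.continuousOn_mul (continuousOn_const.sub cU)
  rw [swap, ← integral_add hrest (hV.continuousOn_mul cU),
    ← intervalIntegral.integral_const_mul]
  congr 1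
  ext s
  ring

theorem mul_eq_add_integral_of_eq_add_integral [NullSingletonClass μ] [SFinite μ]
    {u v U V : ℝ → 𝕜} {c d : 𝕜} {a b : ℝ} (hab : a ≤ b)
    (hU : IntervalIntegrable U μ a b) (hV : IntervalIntegrable V μ a b)
    (hu : ∀ s ∈ Icc a b, u s = c + ∫ t in a..s, U t ∂μ)
    (hv : ∀ s ∈ Icc a b, v s = d + ∫ t in a..s, V t ∂μ) :
    u b * v b = c * d + ∫ s in a..b, (U s * v s + u s * V s) ∂μ := by
  have hUV : IntervalIntegrable (fun s => U s * ∫ t in a..s, V t ∂μ) μ a b :=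
    hU.mul_continuousOn (continuousOn_primitive_interval' hV left_mem_uIcc)
  have hUV' : IntervalIntegrable (fun s => (∫ t in a..s, U t ∂μ) * V s) μ a b :=
    hV.continuousOn_mul (continuousOn_primitive_interval' hU left_mem_uIcc)
  have expand : EqOn (fun s => U s * v s + u s * V s)
      (fun s => (d * U s + c * V s) +
        ((U s * ∫ t in a..s, V t ∂μ) + (∫ t in a..s, U t ∂μ) * V s)) (uIcc a b) := by
    intro s hs
    rw [uIcc_of_le hab] at hs
    simp only [hu s hs, hv s hs]
    ring
  rw [integral_congr expand, integral_add ((hU.const_mul d).add (hV.const_mul c)) (hUV.add hUV'),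
    integral_add (hU.const_mul d) (hV.const_mul c), integral_add hUV hUV',
    intervalIntegral.integral_const_mul, intervalIntegral.integral_const_mul,
    integral_mul_primitive_add_integral_primitive_mul hab hU hV, hu b ⟨hab, le_rfl⟩,
    hv b ⟨hab, le_rfl⟩]
  ring

end

namespace IsKreinSystem

open Complex

variable {a : ℝ → ℂ} {P Ps : ℝ → ℂ → ℂ} {r : ℝ}

theorem christoffel_darboux (hK : IsKreinSystem a P Ps) (lam mu : ℂ) (hr : 0 ≤ r) :
    P r lam * conj (P r mu) - Ps r lam * conj (Ps r mu)
      = I * (lam - conj mu) * ∫ s in (0:ℝ)..r, P s lam * conj (P s mu) := by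
  obtain ⟨ha, hP, hPs, heq⟩ := hK
  have hsub : uIcc 0 r ⊆ Ici 0 := by rw [uIcc_of_le hr]; exact Icc_subset_Ici_self
  have ha : IntervalIntegrable a volume 0 r := ha.intervalIntegrable hsub
  have cP z : ContinuousOn (fun s => P s z) (uIcc 0 r) := (hP z).mono hsub
  have cPs z : ContinuousOn (fun s => Ps s z) (uIcc 0 r) := (hPs z).mono hsub
  have cPc z : ContinuousOn (fun s => conj (P s z)) (uIcc 0 r) :=
    continuous_conj.comp_continuousOn (cP z)
  have cPsc z : ContinuousOn (fun s => conj (Ps s z)) (uIcc 0 r) :=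
    continuous_conj.comp_continuousOn (cPs z)
  have dP z : IntervalIntegrable (fun s => I * z * P s z - conj (a s) * Ps s z) volume 0 r :=
    (continuousOn_const.mul (cP z)).intervalIntegrable.sub (ha.conj.mul_continuousOn (cPs z))
  have dPs z : IntervalIntegrable (fun s => -(a s * P s z)) volume 0 r :=
    (ha.mul_continuousOn (cP z)).neg
  have eP := mul_eq_add_integral_of_eq_add_integral (u := fun s => P s lam)
    (v := fun s => conj (P s mu)) hr (dP lam) (dP mu).conj
    (fun s hs => (heq lam s hs.1).1)
    (fun s hs => by rw [(heq mu s hs.1).1, map_add, map_one, intervalIntegral_conj])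
  have ePs := mul_eq_add_integral_of_eq_add_integral (u := fun s => Ps s lam)
    (v := fun s => conj (Ps s mu)) hr (dPs lam) (dPs mu).conj
    (fun s hs => by rw [(heq lam s hs.1).2, intervalIntegral.integral_neg, sub_eq_add_neg])
    (fun s hs => by rw [(heq mu s hs.1).2, map_sub, map_one, intervalIntegral_conj,
      intervalIntegral.integral_neg, map_neg, sub_eq_add_neg])
  rw [eP, ePs, add_sub_add_left_eq_sub,
    ← integral_sub
      (((dP lam).mul_continuousOn (cPc mu)).add ((dP mu).conj.continuousOn_mul (cP lam)))
      (((dPs lam).mul_continuousOn (cPsc mu)).add ((dPs mu).conj.continuousOn_mul (cPs lam))),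
    ← intervalIntegral.integral_const_mul]
  refine integral_congr fun s _ => ?_
  simp only [map_sub, map_mul, map_neg, conj_conj, conj_I]
  ring

theorem norm_sq_Ps_eq (hK : IsKreinSystem a P Ps) (lam : ℂ) (hr : 0 ≤ r) :
    ‖Ps r lam‖ ^ 2 =
      ‖P r lam‖ ^ 2 + 2 * lam.im * ∫ s in (0:ℝ)..r, ‖P s lam‖ ^ 2 := by
  have h := hK.christoffel_darboux lam lam hr
  simp only [mul_conj', sub_conj, ← ofReal_pow, intervalIntegral.integral_ofReal] at h
  apply ofReal_injective
  push_cast at h ⊢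
  linear_combination -h - 2 * (lam.im : ℂ) * (∫ s in (0:ℝ)..r, ‖P s lam‖ ^ 2 : ℝ) * I_sq

end IsKreinSystem

/-- The Christoffel–Darboux formula for Krein systems, together with its special case
`μ = λ`: `|P_*(r,λ)|² = |P(r,λ)|² + 2 Im(λ) ∫₀^r |P(s,λ)|² ds`. -/
theorem krein_christoffel_darboux
    (a : ℝ → ℂ) (P Ps : ℝ → ℂ → ℂ)
    (hK : IsKreinSystem a P Ps) :
    (∀ lam mu : ℂ, ∀ r : ℝ, 0 ≤ r →
      P r lam * (starRingEnd ℂ) (P r mu) - Ps r lam * (starRingEnd ℂ) (Ps r mu)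
        = Complex.I * (lam - (starRingEnd ℂ) mu) *
            ∫ s in (0:ℝ)..r, P s lam * (starRingEnd ℂ) (P s mu)) ∧
    (∀ lam : ℂ, ∀ r : ℝ, 0 ≤ r →
      ‖Ps r lam‖ ^ 2 = ‖P r lam‖ ^ 2 + 2 * lam.im * ∫ s in (0:ℝ)..r, ‖P s lam‖ ^ 2) :=
  ⟨fun lam mu _ hr => hK.christoffel_darboux lam mu hr,
    fun lam _ hr => hK.norm_sq_Ps_eq lam hr⟩
end
end

section
/- Let a ∈ L¹_loc([0,∞); ℂ) and let P, P_* be the solutions of the Krein system with coefficient a. Then for every r > 0 and every λ ∈ ℂ: (1) if λ ∈ ℝ then |P_*(r,λ)| = |P(r,λ)|; (2) if Im(λ) > 0 then |P_*(r,λ)| > |P(r,λ)|; (3) if Im(λ) < 0 then |P_*(r,λ)| < |P(r,λ)|. -/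
/-!
Along the system, `d/dr (|P_*|² - |P|²) = 2 Im λ |P|²`: the coupling terms `a P conj P_*` and
`conj a P_* conj P` contributed by the two equations are complex conjugates, so their real parts
cancel. Integrating from `0`, where `P = P_* = 1`, gives
`|P_*(r)|² - |P(r)|² = 2 Im λ ∫₀ʳ |P|²`, and the integral is positive since `P` is continuous with
`P(0) = 1`. As the solutions are only absolutely continuous, the product rule used is the one for
absolutely continuous functions, applied to real and imaginary parts.
-/

open MeasureTheory Filter

noncomputable section

open Set ComplexConjugate

theorem ContinuousLinearMap.intervalIntegrable_comp {𝕜 E F : Type*} [NontriviallyNormedField 𝕜]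
    [NormedAddCommGroup E] [NormedSpace 𝕜 E] [NormedAddCommGroup F] [NormedSpace 𝕜 F]
    (L : E →L[𝕜] F) {f : ℝ → E} {μ : Measure ℝ} {a b : ℝ} (hf : IntervalIntegrable f μ a b) :
    IntervalIntegrable (fun x => L (f x)) μ a b :=
  ⟨L.integrable_comp hf.1, L.integrable_comp hf.2⟩

theorem sq_sub_sq_eq_intervalIntegral {f g : ℝ → ℝ} {a b : ℝ}
    (hf : IntervalIntegrable f volume a b)
    (hg : ∀ x ∈ uIcc a b, g x = g a + ∫ t in a..x, f t) :
    g b ^ 2 - g a ^ 2 = ∫ x in a..b, 2 * f x * g x := by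
  set h : ℝ → ℝ := fun x => g a + ∫ t in a..x, f t
  have hgh : EqOn g h (uIcc a b) := hg
  have hac : AbsolutelyContinuousOnInterval h a b :=
    (LipschitzWith.const (g a)).lipschitzOnWith.absolutelyContinuousOnInterval.add
      (hf.absolutelyContinuousOnInterval_intervalIntegral left_mem_uIcc)
  have hderiv : ∀ᵐ x, x ∈ uIoc a b → deriv h x = f x := by
    filter_upwards [hf.ae_hasDerivAt_integral] with x hx hxab
    exact ((hx (uIoc_subset_uIcc hxab) a left_mem_uIcc).const_add (g a)).deriv
  calc g b ^ 2 - g a ^ 2 = h b * h b - h a * h a := by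
        rw [hgh right_mem_uIcc, hgh left_mem_uIcc]; ring
    _ = ∫ x in a..b, deriv h x * h x + h x * deriv h x := (hac.integral_deriv_mul_eq_sub hac).symm
    _ = ∫ x in a..b, 2 * f x * g x := by
        refine intervalIntegral.integral_congr_ae ?_
        filter_upwards [hderiv] with x hx hxab
        rw [hx hxab, hgh (uIoc_subset_uIcc hxab)]
        ring

theorem Complex.normSq_sub_normSq_eq_intervalIntegral {F p : ℝ → ℂ} {a b : ℝ}
    (hF : IntervalIntegrable F volume a b)
    (hp : ∀ x ∈ uIcc a b, p x = p a + ∫ t in a..x, F t) :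
    normSq (p b) - normSq (p a) = ∫ x in a..b, 2 * (F x * conj (p x)).re := by
  have hFsub {x} (hx : x ∈ uIcc a b) : IntervalIntegrable F volume a x :=
    hF.mono_set (uIcc_subset_uIcc_left hx)
  have hre : ∀ x ∈ uIcc a b, (p x).re = (p a).re + ∫ t in a..x, (F t).re := fun x hx => by
    rw [hp x hx, add_re]
    exact congrArg _ (reCLM.intervalIntegral_comp_comm (hFsub hx)).symm
  have him : ∀ x ∈ uIcc a b, (p x).im = (p a).im + ∫ t in a..x, (F t).im := fun x hx => by
    rw [hp x hx, add_im]
    exact congrArg _ (imCLM.intervalIntegral_comp_comm (hFsub hx)).symm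
  have hpc : ContinuousOn p (uIcc a b) :=
    (continuousOn_const.add
      (intervalIntegral.continuousOn_primitive_interval' hF left_mem_uIcc)).congr hp
  have hFre : IntervalIntegrable (fun x => (F x).re) volume a b := reCLM.intervalIntegrable_comp hF
  have hFim : IntervalIntegrable (fun x => (F x).im) volume a b := imCLM.intervalIntegrable_comp hF
  have hFre' : IntervalIntegrable (fun x => 2 * (F x).re * (p x).re) volume a b :=
    (hFre.const_mul 2).mul_continuousOn (continuous_re.comp_continuousOn hpc)
  have hFim' : IntervalIntegrable (fun x => 2 * (F x).im * (p x).im) volume a b :=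
    (hFim.const_mul 2).mul_continuousOn (continuous_im.comp_continuousOn hpc)
  calc normSq (p b) - normSq (p a)
      = ((p b).re ^ 2 - (p a).re ^ 2) + ((p b).im ^ 2 - (p a).im ^ 2) := by
        simp only [normSq_apply]; ring
    _ = ∫ x in a..b, 2 * (F x * conj (p x)).re := by
      rw [sq_sub_sq_eq_intervalIntegral hFre hre, sq_sub_sq_eq_intervalIntegral hFim him,
        ← intervalIntegral.integral_add hFre' hFim']
      congr 1 with x
      simp only [mul_re, conj_re, conj_im]
      ring

namespace IsKreinSystem

variable {a : ℝ → ℂ} {P Ps : ℝ → ℂ → ℂ}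

theorem P_zero (hK : IsKreinSystem a P Ps) (z : ℂ) : P 0 z = 1 := by
  simpa using (hK.2.2.2 z 0 le_rfl).1

theorem Ps_zero (hK : IsKreinSystem a P Ps) (z : ℂ) : Ps 0 z = 1 := by
  simpa using (hK.2.2.2 z 0 le_rfl).2

theorem intervalIntegrable_coeff (hK : IsKreinSystem a P Ps) {r : ℝ} (hr : 0 ≤ r) :
    IntervalIntegrable a volume 0 r :=
  (hK.1.integrableOn_compact_subset (by rw [uIcc_of_le hr]; exact Icc_subset_Ici_self)
    isCompact_uIcc).intervalIntegrable

theorem normSq_Ps_sub_normSq_P (hK : IsKreinSystem a P Ps) (z : ℂ) {r : ℝ} (hr : 0 ≤ r) :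
    Complex.normSq (Ps r z) - Complex.normSq (P r z) =
      2 * z.im * ∫ s in (0:ℝ)..r, Complex.normSq (P s z) := by
  have ⟨_, hPc, hPsc, heq⟩ := hK
  have hIcc : uIcc 0 r ⊆ Ici 0 := by rw [uIcc_of_le hr]; exact Icc_subset_Ici_self
  have haI := hK.intervalIntegrable_coeff hr
  have hPc' : ContinuousOn (fun s => P s z) (uIcc 0 r) := (hPc z).mono hIcc
  have hPsc' : ContinuousOn (fun s => Ps s z) (uIcc 0 r) := (hPsc z).mono hIcc
  set F : ℝ → ℂ := fun s => Complex.I * z * P s z - conj (a s) * Ps s z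
  set G : ℝ → ℂ := fun s => -(a s * P s z)
  have hF : IntervalIntegrable F volume 0 r :=
    (continuousOn_const.mul hPc').intervalIntegrable.sub
      ((Complex.conjCLE.toContinuousLinearMap.intervalIntegrable_comp haI).mul_continuousOn hPsc')
  have hG : IntervalIntegrable G volume 0 r := (haI.mul_continuousOn hPc').neg
  have hP : ∀ s ∈ uIcc 0 r, P s z = P 0 z + ∫ t in (0:ℝ)..s, F t := fun s hs => by
    rw [hK.P_zero]
    exact (heq z s (hIcc hs)).1
  have hPs : ∀ s ∈ uIcc 0 r, Ps s z = Ps 0 z + ∫ t in (0:ℝ)..s, G t := fun s hs => by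
    rw [hK.Ps_zero, intervalIntegral.integral_neg, ← sub_eq_add_neg]
    exact (heq z s (hIcc hs)).2
  have hFP : IntervalIntegrable (fun s => 2 * (F s * conj (P s z)).re) volume 0 r :=
    (Complex.reCLM.intervalIntegrable_comp
      (hF.mul_continuousOn (Complex.continuous_conj.comp_continuousOn hPc'))).const_mul 2
  have hPP : IntervalIntegrable (fun s => Complex.normSq (P s z)) volume 0 r :=
    (Complex.continuous_normSq.comp_continuousOn hPc').intervalIntegrable
  have hGF : ∀ s, 2 * (G s * conj (Ps s z)).re =
      2 * (F s * conj (P s z)).re + 2 * z.im * Complex.normSq (P s z) := fun s => by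
    simp only [F, G, Complex.mul_re, Complex.neg_re, Complex.sub_re, Complex.conj_re,
      Complex.conj_im, Complex.neg_im, Complex.mul_im, Complex.sub_im, Complex.I_re, Complex.I_im,
      Complex.normSq_apply]
    ring
  calc Complex.normSq (Ps r z) - Complex.normSq (P r z)
      = (Complex.normSq (Ps r z) - Complex.normSq (Ps 0 z))
        - (Complex.normSq (P r z) - Complex.normSq (P 0 z)) := by
        rw [hK.P_zero, hK.Ps_zero]; ring
    _ = (∫ s in (0:ℝ)..r, 2 * (G s * conj (Ps s z)).re)
        - ∫ s in (0:ℝ)..r, 2 * (F s * conj (P s z)).re := by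
        rw [Complex.normSq_sub_normSq_eq_intervalIntegral hF hP,
          Complex.normSq_sub_normSq_eq_intervalIntegral hG hPs]
    _ = 2 * z.im * ∫ s in (0:ℝ)..r, Complex.normSq (P s z) := by
        simp_rw [hGF]
        rw [intervalIntegral.integral_add hFP (hPP.const_mul _),
          intervalIntegral.integral_const_mul (2 * z.im)]
        ring

theorem integral_normSq_P_pos (hK : IsKreinSystem a P Ps) (z : ℂ) {r : ℝ} (hr : 0 < r) :
    0 < ∫ s in (0:ℝ)..r, Complex.normSq (P s z) :=
  intervalIntegral.integral_pos hr
    (Complex.continuous_normSq.comp_continuousOn ((hK.2.1 z).mono Icc_subset_Ici_self))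
    (fun s _ => Complex.normSq_nonneg _) ⟨0, left_mem_Icc.mpr hr.le, by simp [hK.P_zero]⟩

end IsKreinSystem

/-- Comparison of `|P_*(r,λ)|` and `|P(r,λ)|` according to the sign of `Im λ`. -/
theorem krein_modulus_comparison
    (a : ℝ → ℂ) (P Ps : ℝ → ℂ → ℂ)
    (hK : IsKreinSystem a P Ps) :
    ∀ r : ℝ, 0 < r → ∀ lam : ℂ,
      (lam.im = 0 → ‖Ps r lam‖ = ‖P r lam‖) ∧
      (0 < lam.im → ‖P r lam‖ < ‖Ps r lam‖) ∧
      (lam.im < 0 → ‖Ps r lam‖ < ‖P r lam‖) := by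
  intro r hr lam
  have hdiff : ‖Ps r lam‖ ^ 2 - ‖P r lam‖ ^ 2 =
      2 * lam.im * ∫ s in (0:ℝ)..r, Complex.normSq (P s lam) := by
    simpa only [Complex.normSq_eq_norm_sq] using hK.normSq_Ps_sub_normSq_P lam hr.le
  have hpos := hK.integral_normSq_P_pos lam hr
  have hsq_lt {x y : ℂ} (h : ‖x‖ ^ 2 < ‖y‖ ^ 2) : ‖x‖ < ‖y‖ :=
    (pow_lt_pow_iff_left₀ (norm_nonneg x) (norm_nonneg y) two_ne_zero).mp h
  refine ⟨fun him => ?_, fun him => hsq_lt ?_, fun him => hsq_lt ?_⟩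
  · rw [him, mul_zero, zero_mul, sub_eq_zero] at hdiff
    exact (sq_eq_sq₀ (norm_nonneg _) (norm_nonneg _)).mp hdiff
  · nlinarith
  · nlinarith
end
end

section
/- For r > 0 and δ > 0, let H_r(x) = (e^{−irx} − 1)/x. Then ∫_ℝ |H_r(x − δi)|² dx = π (1 − e^{−2rδ})/δ, and in particular ∫_ℝ |H_r(x − δi)|² dx < 2π r. -/
/-!
With `a = e^{-rδ}` one has `|H_r(x - δi)|² = (1 + a² - 2a cos(rx)) / (x² + δ²)`, so the integral
reduces to `∫ (x² + δ²)⁻¹ = π/δ` and `∫ cos(rx) / (x² + δ²) = (π/δ) e^{-δ|r|}`. The second is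
Fourier inversion for `t ↦ e^{-2πδ|t|}`, whose Fourier transform is the Cauchy density
`δ / (π (x² + δ²))`. The bound is `1 - e^{-y} < y` for `y = 2rδ > 0`.
-/

open MeasureTheory Set Complex Real FourierTransform ProbabilityTheory

section ExpNegMulAbs

variable {c : ℝ}

lemma cexp_mul_exp_neg_mul_abs_of_nonpos (b : ℝ) {t : ℝ} (ht : t ≤ 0) :
    cexp (b * I * t) * rexp (-(c * |t|)) = cexp ((c + b * I) * t) := by
  rw [abs_of_nonpos ht, ofReal_exp, ← Complex.exp_add]
  push_cast
  ring_nf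

lemma cexp_mul_exp_neg_mul_abs_of_nonneg (b : ℝ) {t : ℝ} (ht : 0 ≤ t) :
    cexp (b * I * t) * rexp (-(c * |t|)) = cexp ((-c + b * I) * t) := by
  rw [abs_of_nonneg ht, ofReal_exp, ← Complex.exp_add]
  push_cast
  ring_nf

lemma integrableOn_Iic_cexp_mul_exp_neg_mul_abs (b : ℝ) (hc : 0 < c) :
    IntegrableOn (fun t : ℝ => cexp (b * I * t) * rexp (-(c * |t|))) (Iic 0) :=
  (integrableOn_exp_mul_complex_Iic (by simpa) 0).congr_fun
    (fun _ ht => (cexp_mul_exp_neg_mul_abs_of_nonpos b ht).symm) measurableSet_Iic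

lemma integrableOn_Ioi_cexp_mul_exp_neg_mul_abs (b : ℝ) (hc : 0 < c) :
    IntegrableOn (fun t : ℝ => cexp (b * I * t) * rexp (-(c * |t|))) (Ioi 0) :=
  (integrableOn_exp_mul_complex_Ioi (by simpa) 0).congr_fun
    (fun _ ht => (cexp_mul_exp_neg_mul_abs_of_nonneg b ht.le).symm) measurableSet_Ioi

lemma integral_cexp_mul_exp_neg_mul_abs (b : ℝ) (hc : 0 < c) :
    ∫ t : ℝ, cexp (b * I * t) * rexp (-(c * |t|)) = ((2 * c / (c ^ 2 + b ^ 2) : ℝ) : ℂ) := by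
  rw [← intervalIntegral.integral_Iic_add_Ioi (integrableOn_Iic_cexp_mul_exp_neg_mul_abs b hc)
    (integrableOn_Ioi_cexp_mul_exp_neg_mul_abs b hc),
    setIntegral_congr_fun measurableSet_Iic fun _ ht => cexp_mul_exp_neg_mul_abs_of_nonpos b ht,
    setIntegral_congr_fun measurableSet_Ioi fun _ ht =>
      cexp_mul_exp_neg_mul_abs_of_nonneg b ht.le,
    integral_exp_mul_complex_Iic (by simpa), integral_exp_mul_complex_Ioi (by simpa)]
  have h₁ : (c : ℂ) + b * I ≠ 0 := fun h => hc.ne' (by simpa using congrArg re h)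
  have h₂ : (-c : ℂ) + b * I ≠ 0 := fun h => hc.ne' (by simpa using congrArg re h)
  have h₃ : (c : ℂ) ^ 2 + b ^ 2 ≠ 0 := by exact_mod_cast (by positivity : c ^ 2 + b ^ 2 ≠ 0)
  simp only [ofReal_zero, mul_zero, Complex.exp_zero]
  push_cast
  field_simp
  linear_combination (-(2 * c * b ^ 2) : ℂ) * I_sq

lemma integrable_cexp_mul_exp_neg_mul_abs (b : ℝ) (hc : 0 < c) :
    Integrable fun t : ℝ => cexp (b * I * t) * rexp (-(c * |t|)) := by
  rw [← integrableOn_univ, ← Iic_union_Ioi (a := 0)]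
  exact (integrableOn_Iic_cexp_mul_exp_neg_mul_abs b hc).union
    (integrableOn_Ioi_cexp_mul_exp_neg_mul_abs b hc)

end ExpNegMulAbs

section Cauchy

variable {γ : NNReal}

lemma fourier_exp_neg_two_pi_mul_abs (hγ : γ ≠ 0) (w : ℝ) :
    𝓕 (fun t : ℝ => (rexp (-(2 * π * γ * |t|)) : ℂ)) w = cauchyPDFReal 0 γ w := by
  have hc : 0 < 2 * π * γ := by positivity
  calc _ = ∫ t : ℝ, cexp ((-2 * π * w : ℝ) * I * t) * rexp (-(2 * π * γ * |t|)) := by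
        rw [Real.fourier_real_eq_integral_exp_smul]
        congr 1 with t
        rw [smul_eq_mul]
        push_cast
        ring_nf
    _ = _ := by
        rw [integral_cexp_mul_exp_neg_mul_abs _ hc, cauchyPDFReal_def]
        congr 1
        field_simp
        ring

lemma integral_cexp_mul_cauchyPDFReal (hγ : γ ≠ 0) (r : ℝ) :
    ∫ x : ℝ, cexp (r * x * I) * cauchyPDFReal 0 γ x = rexp (-(γ * |r|)) := by
  set f : ℝ → ℂ := fun t => rexp (-(2 * π * γ * |t|))
  have hf : Integrable f := by
    simpa [f] using integrable_cexp_mul_exp_neg_mul_abs 0 (by positivity : 0 < 2 * π * γ)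
  have hFf : 𝓕 f = fun w => (cauchyPDFReal 0 γ w : ℂ) :=
    funext (fourier_exp_neg_two_pi_mul_abs hγ)
  have h'f : Integrable (𝓕 f) := hFf ▸ (integrable_cauchyPDFReal 0).ofReal
  calc ∫ x : ℝ, cexp (r * x * I) * cauchyPDFReal 0 γ x
      = 𝓕⁻ (𝓕 f) (r / (2 * π)) := by
        rw [Real.fourierInv_eq', hFf]
        congr 1 with x
        rw [smul_eq_mul, RCLike.inner_apply, conj_trivial]
        push_cast
        field_simp
    _ = f (r / (2 * π)) := hf.fourierInv_fourier_eq h'f (by fun_prop)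
    _ = rexp (-(γ * |r|)) := by
        simp only [f, abs_div, abs_of_pos two_pi_pos]
        field_simp

lemma integral_cos_mul_cauchyPDFReal (hγ : γ ≠ 0) (r : ℝ) :
    ∫ x : ℝ, Real.cos (r * x) * cauchyPDFReal 0 γ x = rexp (-(γ * |r|)) := by
  have hint : Integrable fun x : ℝ => cexp (r * x * I) * cauchyPDFReal 0 γ x :=
    (integrable_cauchyPDFReal 0).ofReal.bdd_mul (c := 1) (by fun_prop)
      (ae_of_all _ fun x => by rw [← ofReal_mul, norm_exp_ofReal_mul_I])
  have h := integral_re hint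
  rw [integral_cexp_mul_cauchyPDFReal hγ r, RCLike.re_to_complex, ofReal_re] at h
  simpa [← ofReal_mul, exp_ofReal_mul_I_re] using h

end Cauchy

lemma sq_norm_cexp_sub_one_div (r δ x : ℝ) :
    ‖(cexp (-I * r * ((x : ℂ) - δ * I)) - 1) / ((x : ℂ) - δ * I)‖ ^ 2
      = (1 + rexp (-(r * δ)) ^ 2 - 2 * rexp (-(r * δ)) * Real.cos (r * x)) / (x ^ 2 + δ ^ 2) := by
  set a := rexp (-(r * δ))
  have hexp : cexp (-I * r * ((x : ℂ) - δ * I)) = a * cexp ((-(r * x) : ℝ) * I) := by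
    rw [ofReal_exp, ← Complex.exp_add]
    congr 1
    push_cast
    linear_combination (r * δ : ℂ) * I_sq
  have hnum :
      normSq (a * cexp ((-(r * x) : ℝ) * I) - 1) = 1 + a ^ 2 - 2 * a * Real.cos (r * x) := by
    simp only [normSq_apply, sub_re, sub_im, re_ofReal_mul, im_ofReal_mul, exp_ofReal_mul_I_re,
      exp_ofReal_mul_I_im, one_re, one_im, Real.cos_neg, Real.sin_neg]
    linear_combination a ^ 2 * Real.sin_sq_add_cos_sq (r * x)
  have hden : (x : ℂ) - δ * I = x + (-δ : ℝ) * I := by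
    push_cast
    ring
  rw [norm_div, div_pow, Complex.sq_norm, Complex.sq_norm, hexp, hnum, hden, normSq_add_mul_I]
  ring

lemma integral_one_add_sq_sub_mul_cos_div_sq_add_sq {δ : ℝ} (hδ : 0 < δ) (a r : ℝ) :
    ∫ x : ℝ, (1 + a ^ 2 - 2 * a * Real.cos (r * x)) / (x ^ 2 + δ ^ 2)
      = π / δ * (1 + a ^ 2 - 2 * a * rexp (-(δ * |r|))) := by
  set γ := δ.toNNReal
  have hγ : γ ≠ 0 := by simpa [γ] using hδ
  have hγδ : (γ : ℝ) = δ := Real.coe_toNNReal δ hδ.le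
  have hp := integrable_cauchyPDFReal 0 (γ := γ)
  have hcos : Integrable fun x => Real.cos (r * x) * cauchyPDFReal 0 γ x :=
    hp.bdd_mul (c := 1) (by fun_prop) (ae_of_all _ fun x => by simpa using Real.abs_cos_le_one _)
  calc ∫ x : ℝ, (1 + a ^ 2 - 2 * a * Real.cos (r * x)) / (x ^ 2 + δ ^ 2)
      = ∫ x : ℝ, π / δ * ((1 + a ^ 2) * cauchyPDFReal 0 γ x
          - 2 * a * (Real.cos (r * x) * cauchyPDFReal 0 γ x)) := by
        congr 1 with x
        rw [cauchyPDFReal_def, hγδ]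
        field_simp
        ring
    _ = π / δ * (1 + a ^ 2 - 2 * a * rexp (-(δ * |r|))) := by
        rw [integral_const_mul, integral_sub (hp.const_mul _) (hcos.const_mul _),
          integral_const_mul, integral_const_mul, integral_cauchyPDFReal_eq_one 0 hγ,
          integral_cos_mul_cauchyPDFReal hγ, hγδ, mul_one]

/-- For `H_r(x) = (e^{-irx} - 1)/x` and `δ > 0`,
`∫_ℝ |H_r(x - δi)|² dx = π (1 - e^{-2rδ})/δ < 2π r`. -/
theorem Hr_integral
    (r δ : ℝ) (hr : 0 < r) (hδ : 0 < δ) :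
    (∫ x : ℝ, ‖(Complex.exp (-Complex.I * r * ((x : ℂ) - δ * Complex.I)) - 1) /
        ((x : ℂ) - δ * Complex.I)‖ ^ 2)
      = Real.pi * (1 - Real.exp (-2 * r * δ)) / δ ∧
    (∫ x : ℝ, ‖(Complex.exp (-Complex.I * r * ((x : ℂ) - δ * Complex.I)) - 1) /
        ((x : ℂ) - δ * Complex.I)‖ ^ 2)
      < 2 * Real.pi * r := by
  have hval : ∫ x : ℝ, ‖(cexp (-I * r * ((x : ℂ) - δ * I)) - 1) / ((x : ℂ) - δ * I)‖ ^ 2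
      = π * (1 - rexp (-2 * r * δ)) / δ := by
    have hsq : rexp (-2 * r * δ) = rexp (-(r * δ)) ^ 2 := by
      rw [← Real.exp_nat_mul]
      ring_nf
    simp_rw [sq_norm_cexp_sub_one_div, integral_one_add_sq_sub_mul_cos_div_sq_add_sq hδ,
      abs_of_pos hr, hsq]
    ring_nf
  refine ⟨hval, hval ▸ ?_⟩
  have h : 1 - 2 * r * δ < rexp (-2 * r * δ) := by
    simpa only [neg_mul] using one_sub_lt_exp_neg (by positivity : 2 * r * δ ≠ 0)
  calc π * (1 - rexp (-2 * r * δ)) / δ < π * (2 * r * δ) / δ := by gcongr; linarith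
    _ = 2 * π * r := by field_simp
end

section
/- Let a ∈ L¹_loc([0,∞); ℂ) and let P, P_* be the solutions of the Krein system with coefficient a. For λ ∈ ℂ define φ(r, λ) = (e^{−iλr}/2)(P(2r, λ) + P_*(2r, λ)) and ψ(r, λ) = (e^{−iλr}/(2i))(P(2r, λ) − P_*(2r, λ)), and set p(r) = −2 Re a(2r), q(r) = 2 Im a(2r). Then φ(0,λ) = 1, ψ(0,λ) = 0, and the pair f = (φ, ψ) is locally absolutely continuous in r and satisfies the Dirac equation J f′(r) + Q(r) f(r) = λ f(r) for almost every r ≥ 0, where J = [[0, 1], [−1, 0]] and Q = [[−q, p], [p, q]]. -/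
/-!
Substituting `r = 2s` and multiplying by the gauge factor `e^{-iλs}` turns the Krein system into
`A' = iλA - 2 conj(a(2s)) B`, `B' = -iλB - 2 a(2s) A` for `A = e^{-iλs} P(2s)`, `B = e^{-iλs} P_*(2s)`.
In the combinations `(A + B)/2` and `(A - B)/(2i)` the coefficient enters only through
`a + conj a = -p` and `a - conj a = i q`, which is the Dirac system.
The only analytic input is the product rule `(gF)' = g'F + gF'` for `F` given in integral form
with merely integrable `F'`; it reduces to Fubini on the triangle `{r ≤ s}`.
-/

open MeasureTheory Filter

noncomputable section

open Set ComplexConjugate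

section IntegralForm

variable {𝕜 : Type*} [RCLike 𝕜] {f g g' : ℝ → 𝕜} {a b : ℝ}

theorem setIntegral_deriv_mul_primitive (hf : IntegrableOn f (Ioc a b))
    (hg : ∀ x, HasDerivAt g (g' x) x) (hg' : Continuous g') :
    ∫ s in Ioc a b, g' s * ∫ r in Ioc a s, f r = ∫ r in Ioc a b, (g b - g r) * f r := by
  set ν := volume.restrict (Ioc a b)
  set T : Set (ℝ × ℝ) := {p | p.2 ≤ p.1}
  set G : ℝ × ℝ → 𝕜 := T.indicator fun p => g' p.1 * f p.2
  have hG : Integrable G (ν.prod ν) :=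
    (hg'.integrableOn_Ioc.mul_prod hf).indicator
      (isClosed_le continuous_snd continuous_fst).measurableSet
  have inner_r : ∀ s ∈ Ioc a b, ∫ r, G (s, r) ∂ν = g' s * ∫ r in Ioc a s, f r := by
    intro s hs
    have hIoc : Iic s ∩ Ioc a b = Ioc a s := by
      ext x; simp only [mem_inter_iff, mem_Iic, mem_Ioc]
      exact ⟨fun h => ⟨h.2.1, h.1⟩, fun h => ⟨h.2, h.1, h.2.trans hs.2⟩⟩
    have hGs : (fun r => G (s, r)) = (Iic s).indicator fun r => g' s * f r := by
      ext r; simp [G, T, indicator_apply]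
    rw [hGs, integral_indicator measurableSet_Iic, Measure.restrict_restrict measurableSet_Iic,
      hIoc, integral_const_mul]
  have inner_s : ∀ r ∈ Ioc a b, ∫ s, G (s, r) ∂ν = (g b - g r) * f r := by
    intro r hr
    have hIcc : Ici r ∩ Ioc a b = Icc r b := by
      ext x; simp only [mem_inter_iff, mem_Ici, mem_Ioc, mem_Icc]
      exact ⟨fun h => ⟨h.1, h.2.2⟩, fun h => ⟨h.1, hr.1.trans_le h.1, h.2⟩⟩
    have hGr : (fun s => G (s, r)) = (Ici r).indicator fun s => g' s * f r := by
      ext s; simp [G, T, indicator_apply]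
    rw [hGr, integral_indicator measurableSet_Ici, Measure.restrict_restrict measurableSet_Ici,
      hIcc, integral_Icc_eq_integral_Ioc, ← intervalIntegral.integral_of_le hr.2,
      intervalIntegral.integral_mul_const,
      intervalIntegral.integral_eq_sub_of_hasDerivAt (fun x _ => hg x) (hg'.intervalIntegrable _ _)]
  calc ∫ s in Ioc a b, g' s * ∫ r in Ioc a s, f r
      = ∫ s, ∫ r, G (s, r) ∂ν ∂ν := (setIntegral_congr_fun measurableSet_Ioc inner_r).symm
    _ = ∫ r, ∫ s, G (s, r) ∂ν ∂ν := integral_integral_swap hG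
    _ = ∫ r in Ioc a b, (g b - g r) * f r := setIntegral_congr_fun measurableSet_Ioc inner_s

theorem mul_eq_add_integral_of_eq_add_integral_s18 {F : ℝ → 𝕜} {c : 𝕜} (hab : a ≤ b)
    (hf : IntervalIntegrable f volume a b) (hF : ∀ x ∈ Icc a b, F x = c + ∫ r in a..x, f r)
    (hg : ∀ x, HasDerivAt g (g' x) x) (hg' : Continuous g') :
    g b * F b = g a * c + ∫ x in a..b, (g' x * F x + g x * f x) := by
  rw [← uIcc_of_le hab] at hF
  have hprim : ContinuousOn (fun x => ∫ r in a..x, f r) (uIcc a b) :=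
    intervalIntegral.continuousOn_primitive_interval ((intervalIntegrable_iff' enorm_ne_top).mp hf)
  have hg'c : IntervalIntegrable (fun x => g' x * c) volume a b :=
    (hg'.mul continuous_const).intervalIntegrable _ _
  have hg'prim : IntervalIntegrable (fun x => g' x * ∫ r in a..x, f r) volume a b :=
    (hg'.continuousOn.mul hprim).intervalIntegrable
  have hg'F : IntervalIntegrable (fun x => g' x * F x) volume a b :=
    (hg'.continuousOn.mul ((continuousOn_const.add hprim).congr hF)).intervalIntegrable
  have hgf : IntervalIntegrable (fun x => g x * f x) volume a b :=
    hf.continuousOn_mul fun x _ => (hg x).continuousAt.continuousWithinAt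
  have hsplit : ∫ x in a..b, g' x * F x
      = (g b - g a) * c + ∫ x in a..b, g' x * ∫ r in a..x, f r := by
    rw [intervalIntegral.integral_congr (g := fun x => g' x * c + g' x * ∫ r in a..x, f r)
        fun x hx => by simp only [hF x hx, mul_add],
      intervalIntegral.integral_add hg'c hg'prim, intervalIntegral.integral_mul_const,
      intervalIntegral.integral_eq_sub_of_hasDerivAt (fun x _ => hg x) (hg'.intervalIntegrable _ _)]
  have hswap : ∫ x in a..b, g' x * ∫ r in a..x, f r
      = g b * (∫ x in a..b, f x) - ∫ x in a..b, g x * f x := by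
    rw [← intervalIntegral.integral_const_mul,
      ← intervalIntegral.integral_sub (hf.const_mul (g b)) hgf]
    simp only [intervalIntegral.integral_of_le hab, ← sub_mul]
    rw [← setIntegral_deriv_mul_primitive hf.1 hg hg']
    refine setIntegral_congr_fun measurableSet_Ioc fun x hx => ?_
    simp only [intervalIntegral.integral_of_le hx.1.le]
  rw [intervalIntegral.integral_add hg'F hgf, hsplit, hswap, hF b right_mem_uIcc]
  ring

theorem linear_combination_eq_add_integral {u v c d : 𝕜} (α β : 𝕜) {x : ℝ}
    (hf : IntervalIntegrable f volume a x) (hg : IntervalIntegrable g volume a x)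
    (hu : u = c + ∫ r in a..x, f r) (hv : v = d + ∫ r in a..x, g r) :
    α * u + β * v = (α * c + β * d) + ∫ r in a..x, (α * f r + β * g r) := by
  rw [intervalIntegral.integral_add (hf.const_mul α) (hg.const_mul β),
    intervalIntegral.integral_const_mul, intervalIntegral.integral_const_mul, hu, hv]
  ring

end IntegralForm

namespace IsKreinSystem

variable {a : ℝ → ℂ} {P Ps : ℝ → ℂ → ℂ}

theorem intervalIntegrable_rhs (hK : IsKreinSystem a P Ps) (z : ℂ) {T : ℝ} (hT : 0 ≤ T) :
    IntervalIntegrable (fun r => Complex.I * z * P r z - conj (a r) * Ps r z) volume 0 T ∧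
      IntervalIntegrable (fun r => a r * P r z) volume 0 T := by
  obtain ⟨ha, hP, hPs, -⟩ := hK
  have hsub : uIcc 0 T ⊆ Ici 0 := by rw [uIcc_of_le hT]; exact Icc_subset_Ici_self
  have haT : IntegrableOn a (uIcc 0 T) := ha.integrableOn_compact_subset hsub isCompact_uIcc
  have hconj : IntegrableOn (fun r => conj (a r)) (uIcc 0 T) :=
    Complex.conjCLE.toContinuousLinearMap.integrable_comp haT
  exact ⟨((continuousOn_const.mul ((hP z).mono hsub)).intervalIntegrable).sub
      (hconj.intervalIntegrable.mul_continuousOn ((hPs z).mono hsub)),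
    haT.intervalIntegrable.mul_continuousOn ((hP z).mono hsub)⟩

theorem intervalIntegrable_rhs_comp_two_mul (hK : IsKreinSystem a P Ps) (z : ℂ) {t : ℝ}
    (ht : 0 ≤ t) :
    IntervalIntegrable
        (fun r => 2 * (Complex.I * z * P (2 * r) z - conj (a (2 * r)) * Ps (2 * r) z)) volume 0 t ∧
      IntervalIntegrable (fun r => -2 * (a (2 * r) * P (2 * r) z)) volume 0 t := by
  obtain ⟨hP, hPs⟩ := hK.intervalIntegrable_rhs z (by positivity : 0 ≤ 2 * t)
  constructor
  · simpa using (hP.comp_mul_left (c := 2)).const_mul 2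
  · simpa using (hPs.comp_mul_left (c := 2)).const_mul (-2)

theorem eq_add_integral_comp_two_mul (hK : IsKreinSystem a P Ps) (z : ℂ) {s : ℝ} (hs : 0 ≤ s) :
    P (2 * s) z =
        1 + ∫ r in 0..s, 2 * (Complex.I * z * P (2 * r) z - conj (a (2 * r)) * Ps (2 * r) z) ∧
      Ps (2 * s) z = 1 + ∫ r in 0..s, -2 * (a (2 * r) * P (2 * r) z) := by
  have hsubst : ∀ k : ℝ → ℂ, ∫ r in 0..2 * s, k r = ∫ r in 0..s, 2 * k (2 * r) := fun k => by
    simp [intervalIntegral.integral_const_mul]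
  obtain ⟨hP, hPs⟩ := hK.2.2.2 z (2 * s) (by positivity)
  refine ⟨by rw [hP, hsubst], ?_⟩
  rw [hPs, hsubst, sub_eq_add_neg, ← intervalIntegral.integral_neg]
  simp only [neg_mul]

theorem exp_mul_linear_combination_eq (hK : IsKreinSystem a P Ps) (z α β : ℂ) {t : ℝ}
    (ht : 0 ≤ t) :
    Complex.exp (-Complex.I * z * t) * (α * P (2 * t) z + β * Ps (2 * t) z) =
      (α + β) + ∫ s in 0..t,
        (-Complex.I * z * Complex.exp (-Complex.I * z * s) * (α * P (2 * s) z + β * Ps (2 * s) z) +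
          Complex.exp (-Complex.I * z * s) *
            (α * (2 * (Complex.I * z * P (2 * s) z - conj (a (2 * s)) * Ps (2 * s) z)) +
              β * (-2 * (a (2 * s) * P (2 * s) z)))) := by
  have hE : ∀ x : ℝ, HasDerivAt (fun s : ℝ => Complex.exp (-Complex.I * z * s))
      (-Complex.I * z * Complex.exp (-Complex.I * z * x)) x := fun x => by
    simpa [mul_comm] using ((hasDerivAt_id (x : ℂ)).const_mul (-Complex.I * z)).cexp.comp_ofReal
  have hint := fun s (hs : 0 ≤ s) => hK.intervalIntegrable_rhs_comp_two_mul z hs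
  have hcomb := fun s (hs : s ∈ Icc 0 t) => linear_combination_eq_add_integral α β
    (hint s hs.1).1 (hint s hs.1).2 (hK.eq_add_integral_comp_two_mul z hs.1).1
    (hK.eq_add_integral_comp_two_mul z hs.1).2
  rw [mul_eq_add_integral_of_eq_add_integral_s18 ht
      (((hint t ht).1.const_mul α).add ((hint t ht).2.const_mul β)) hcomb hE (by fun_prop),
    Complex.ofReal_zero, mul_zero, Complex.exp_zero, one_mul, mul_one, mul_one]

end IsKreinSystem

section DiracIdentities

-- `E`, `A`, `B`, `z` stand for `e^{-iλs}`, `P(2s, λ)`, `P_*(2s, λ)`, `a(2s)`.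
variable (E lam A B z : ℂ)

theorem dirac_identity_fst :
    -Complex.I * lam * E * (1 / 2 * A + 1 / 2 * B) +
        E * (1 / 2 * (2 * (Complex.I * lam * A - conj z * B)) + 1 / 2 * (-2 * (z * A))) =
      ((-2 * z.re : ℝ) : ℂ) * (E / 2 * (A + B)) + ((2 * z.im : ℝ) : ℂ) * (E / (2 * Complex.I) * (A - B))
        - lam * (E / (2 * Complex.I) * (A - B)) := by
  push_cast
  rw [Complex.re_eq_add_conj, Complex.im_eq_sub_conj]
  field_simp
  ring_nf
  simp only [Complex.I_sq, Complex.I_pow_three]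
  ring

theorem dirac_identity_snd :
    -Complex.I * lam * E * (1 / (2 * Complex.I) * A + -1 / (2 * Complex.I) * B) +
        E * (1 / (2 * Complex.I) * (2 * (Complex.I * lam * A - conj z * B)) +
          -1 / (2 * Complex.I) * (-2 * (z * A))) =
      lam * (E / 2 * (A + B)) + ((2 * z.im : ℝ) : ℂ) * (E / 2 * (A + B))
        - ((-2 * z.re : ℝ) : ℂ) * (E / (2 * Complex.I) * (A - B)) := by
  push_cast
  rw [Complex.re_eq_add_conj, Complex.im_eq_sub_conj]
  field_simp
  ring_nf

end DiracIdentities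

/-- The transformation of a Krein system into a Dirac system: with
`φ(r,λ) = e^{-iλr}/2 (P(2r,λ) + P_*(2r,λ))`, `ψ(r,λ) = e^{-iλr}/(2i) (P(2r,λ) - P_*(2r,λ))`,
`p(r) = -2 Re a(2r)`, `q(r) = 2 Im a(2r)`, the pair `f = (φ, ψ)` satisfies `φ(0) = 1`,
`ψ(0) = 0` and the Dirac equation `J f′ + Q f = λ f` (in integral form, equivalent to
local absolute continuity plus the equation a.e.): componentwise
`φ′ = p φ + q ψ - λ ψ`, `ψ′ = λ φ + q φ - p ψ`. -/
theorem krein_to_dirac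
    (a : ℝ → ℂ) (P Ps : ℝ → ℂ → ℂ)
    (hK : IsKreinSystem a P Ps)
    (lam : ℂ) (φ ψ : ℝ → ℂ) (p q : ℝ → ℝ)
    (hφ : ∀ r : ℝ, φ r =
      Complex.exp (-Complex.I * lam * r) / 2 * (P (2 * r) lam + Ps (2 * r) lam))
    (hψ : ∀ r : ℝ, ψ r =
      Complex.exp (-Complex.I * lam * r) / (2 * Complex.I) * (P (2 * r) lam - Ps (2 * r) lam))
    (hp : ∀ r : ℝ, p r = -2 * (a (2 * r)).re)
    (hq : ∀ r : ℝ, q r = 2 * (a (2 * r)).im) :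
    φ 0 = 1 ∧ ψ 0 = 0 ∧
    ∀ t : ℝ, 0 ≤ t →
      (φ t = 1 + ∫ s in (0:ℝ)..t,
        ((p s : ℂ) * φ s + (q s : ℂ) * ψ s - lam * ψ s)) ∧
      (ψ t = ∫ s in (0:ℝ)..t,
        (lam * φ s + (q s : ℂ) * φ s - (p s : ℂ) * ψ s)) := by
  obtain ⟨hP0, hPs0⟩ : P 0 lam = 1 ∧ Ps 0 lam = 1 := by simpa using hK.2.2.2 lam 0 le_rfl
  refine ⟨by norm_num [hφ, hP0, hPs0], by simp [hψ, hP0, hPs0], fun t ht => ⟨?_, ?_⟩⟩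
  · rw [hφ t, show ∀ E A B : ℂ, E / 2 * (A + B) = E * (1 / 2 * A + 1 / 2 * B) by intros; ring,
      hK.exp_mul_linear_combination_eq lam _ _ ht, show (1 / 2 + 1 / 2 : ℂ) = 1 by norm_num]
    refine congrArg _ (intervalIntegral.integral_congr fun s _ => ?_)
    simp only [hφ, hψ, hp, hq]
    exact dirac_identity_fst ..
  · rw [hψ t, show ∀ E A B : ℂ, E / (2 * Complex.I) * (A - B) =
        E * (1 / (2 * Complex.I) * A + -1 / (2 * Complex.I) * B) by intros; ring,
      hK.exp_mul_linear_combination_eq lam _ _ ht,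
      show (1 / (2 * Complex.I) + -1 / (2 * Complex.I)) = 0 by ring, zero_add]
    refine intervalIntegral.integral_congr fun s _ => ?_
    simp only [hφ, hψ, hp, hq]
    exact dirac_identity_snd ..
end
end

section
/- Let a ∈ L¹_loc([0,∞); ℂ) be real-valued and let P, P_* be the solutions of the Krein system with coefficient a. Then for every r ≥ 0 the value P_*(r, i) is a real number and P_*(r, i) > 0. -/
open MeasureTheory Filter

noncomputable section

open Set

/-!
At `λ = i` with real `a`, the real parts `(x, y)` and the imaginary parts of `(P, P_*)` both solve
`x' = -x - a y`, `y' = -a x`. The imaginary parts start at `0`, and `E = x² + y²` satisfies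
`E' = -2x² - 4axy ≤ 2|a| E`, so Grönwall's inequality forces them to vanish. For the real parts,
`(y² - x²)' = 2x²`, so `y(r)² ≥ 2 ∫₀ʳ x² > 0` for `r > 0`: `y` never vanishes, and `y(0) = 1`.
-/

theorem Set.uIcc_subset_Ici_of_le {α : Type*} [LinearOrder α] {a b : α} (h : a ≤ b) :
    uIcc a b ⊆ Ici a := by
  rw [uIcc_of_le h]
  exact Icc_subset_Ici_self

theorem LipschitzOnWith.comp_absolutelyContinuousOnInterval {X Y : Type*}
    [PseudoMetricSpace X] [PseudoMetricSpace Y] {f : ℝ → X} {g : X → Y} {K : NNReal} {s : Set X}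
    {a b : ℝ} (hg : LipschitzOnWith K g s) (hfs : MapsTo f (uIcc a b) s)
    (hf : AbsolutelyContinuousOnInterval f a b) :
    AbsolutelyContinuousOnInterval (g ∘ f) a b := by
  unfold AbsolutelyContinuousOnInterval at hf ⊢
  apply squeeze_zero' ?_ ?_ (by simpa using hf.const_mul (K : ℝ))
  · exact Eventually.of_forall fun _ ↦ Finset.sum_nonneg fun _ _ ↦ dist_nonneg
  rw [eventually_inf_principal]
  filter_upwards with E hE
  rw [Finset.mul_sum]
  gcongr with i hi
  exact hg.dist_le_mul _ (hfs (hE.1 i hi).1) _ (hfs (hE.1 i hi).2)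

theorem ContDiff.comp_absolutelyContinuousOnInterval {f g : ℝ → ℝ} {a b : ℝ}
    (hg : ContDiff ℝ 1 g) (hf : AbsolutelyContinuousOnInterval f a b) :
    AbsolutelyContinuousOnInterval (g ∘ f) a b := by
  obtain ⟨C, hC⟩ := hf.exists_bound
  obtain ⟨K, hK⟩ := hg.contDiffOn.exists_lipschitzOnWith (s := Icc (-C) C) (by decide)
    (convex_Icc _ _) isCompact_Icc
  exact hK.comp_absolutelyContinuousOnInterval (fun t ht ↦ abs_le.mp (hC t ht)) hf

theorem IntervalIntegrable.absolutelyContinuousOnInterval_const_add_integral {f : ℝ → ℝ}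
    {a b c : ℝ} (hf : IntervalIntegrable f volume a b) (hc : c ∈ uIcc a b) (x₀ : ℝ) :
    AbsolutelyContinuousOnInterval (fun t ↦ x₀ + ∫ s in c..t, f s) a b :=
  (LipschitzWith.const x₀).lipschitzOnWith.absolutelyContinuousOnInterval.fun_add
    (hf.absolutelyContinuousOnInterval_intervalIntegral hc)

theorem mul_eq_add_integral_of_eq_add_integral_s19 {x y f g : ℝ → ℝ} {R : ℝ}
    (hf : IntervalIntegrable f volume 0 R) (hg : IntervalIntegrable g volume 0 R)
    (hx : ∀ t ∈ uIcc 0 R, x t = x 0 + ∫ s in 0..t, f s)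
    (hy : ∀ t ∈ uIcc 0 R, y t = y 0 + ∫ s in 0..t, g s) :
    x R * y R = x 0 * y 0 + ∫ s in 0..R, (f s * y s + x s * g s) := by
  have h0 : (0 : ℝ) ∈ uIcc 0 R := left_mem_uIcc
  have key := AbsolutelyContinuousOnInterval.integral_deriv_mul_eq_sub
    (hf.absolutelyContinuousOnInterval_const_add_integral h0 (x 0))
    (hg.absolutelyContinuousOnInterval_const_add_integral h0 (y 0))
  simp only [intervalIntegral.integral_same, add_zero, ← hx R right_mem_uIcc,
    ← hy R right_mem_uIcc] at key
  rw [← sub_eq_iff_eq_add', ← key]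
  refine intervalIntegral.integral_congr_ae ?_
  filter_upwards [hf.ae_hasDerivAt_integral, hg.ae_hasDerivAt_integral] with t hft hgt ht
  have ht' := uIoc_subset_uIcc ht
  rw [((hft ht' 0 h0).const_add (x 0)).deriv, ((hgt ht' 0 h0).const_add (y 0)).deriv,
    ← hx t ht', ← hy t ht']

theorem exp_neg_integral_eq_one_add_integral {k : ℝ → ℝ} {R : ℝ}
    (hk : IntervalIntegrable k volume 0 R) :
    Real.exp (-∫ s in 0..R, k s)
      = 1 + ∫ s in 0..R, -(k s * Real.exp (-∫ u in 0..s, k u)) := by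
  have hw := (Real.contDiff_exp.comp contDiff_neg).comp_absolutelyContinuousOnInterval
    (hk.absolutelyContinuousOnInterval_intervalIntegral left_mem_uIcc)
  have key := hw.integral_deriv_eq_sub
  simp only [Function.comp_apply, intervalIntegral.integral_same, neg_zero, Real.exp_zero] at key
  rw [← sub_eq_iff_eq_add', ← key]
  refine intervalIntegral.integral_congr_ae ?_
  filter_upwards [hk.ae_hasDerivAt_integral] with t hkt ht
  simp only [Function.comp_def]
  rw [(hkt (uIoc_subset_uIcc ht) 0 left_mem_uIcc).fun_neg.exp.deriv]
  ring

/-- Grönwall's inequality without constant term, via the integrating factor `exp (-∫ k)`. -/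
theorem nonpos_of_le_integral_mul {φ k : ℝ → ℝ} {R : ℝ} (hR : 0 ≤ R)
    (hk : IntervalIntegrable k volume 0 R) (hk₀ : ∀ t ∈ Icc 0 R, 0 ≤ k t)
    (hφ : ContinuousOn φ (Icc 0 R)) (h : ∀ t ∈ Icc 0 R, φ t ≤ ∫ s in 0..t, k s * φ s) :
    φ R ≤ 0 := by
  set ψ : ℝ → ℝ := fun t ↦ ∫ s in 0..t, k s * φ s
  set w : ℝ → ℝ := fun t ↦ Real.exp (-∫ s in 0..t, k s)
  rw [← uIcc_of_le hR] at hφ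
  have hkφ : IntervalIntegrable (fun s ↦ k s * φ s) volume 0 R := hk.mul_continuousOn hφ
  have hw : ContinuousOn w (uIcc 0 R) :=
    (hk.absolutelyContinuousOnInterval_intervalIntegral left_mem_uIcc).continuousOn.neg.rexp
  have hψw : ψ R * w R = -∫ s in 0..R, k s * w s * (ψ s - φ s) := by
    have := mul_eq_add_integral_of_eq_add_integral_s19 (x := ψ) (y := w) hkφ
      (hk.mul_continuousOn hw).neg (fun t _ ↦ by simp [ψ]) fun t ht ↦ by
        simpa [w] using exp_neg_integral_eq_one_add_integral
          (hk.mono_set (uIcc_subset_uIcc left_mem_uIcc ht))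
    simp only [ψ, w, intervalIntegral.integral_same, zero_mul, zero_add, Pi.neg_apply] at this
    rw [this, ← intervalIntegral.integral_neg]
    congr 1 with s
    ring
  have hψ : ψ R ≤ 0 := by
    refine nonpos_of_mul_nonpos_left (b := w R) ?_ (Real.exp_pos _)
    rw [hψw, neg_nonpos]
    exact intervalIntegral.integral_nonneg hR fun s hs ↦
      mul_nonneg (mul_nonneg (hk₀ s hs) (Real.exp_pos _).le) (sub_nonneg.2 (h s hs))
  exact (h R ⟨hR, le_rfl⟩).trans hψ

/-- The Krein system at `λ = i` with real coefficient `b`, i.e. `x' = -x - b y`, `y' = -b x`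
on `[0, ∞)`, solved by the real and by the imaginary parts of `(P(·, i), P_*(·, i))`. -/
structure IsKreinSolutionAtI (b x y : ℝ → ℝ) : Prop where
  intervalIntegrable : ∀ r, 0 ≤ r → IntervalIntegrable b volume 0 r
  continuousOn_fst : ContinuousOn x (Ici 0)
  continuousOn_snd : ContinuousOn y (Ici 0)
  fst_eq : ∀ r, 0 ≤ r → x r = x 0 + ∫ s in 0..r, (-x s - b s * y s)
  snd_eq : ∀ r, 0 ≤ r → y r = y 0 - ∫ s in 0..r, b s * x s

namespace IsKreinSolutionAtI

variable {b x y : ℝ → ℝ} {r : ℝ}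

theorem intervalIntegrable_mul (h : IsKreinSolutionAtI b x y) {z : ℝ → ℝ}
    (hz : ContinuousOn z (Ici 0)) (hr : 0 ≤ r) :
    IntervalIntegrable (fun s ↦ b s * z s) volume 0 r :=
  (h.intervalIntegrable _ hr).mul_continuousOn (hz.mono (uIcc_subset_Ici_of_le hr))

theorem mul_self_fst_eq (h : IsKreinSolutionAtI b x y) (hr : 0 ≤ r) :
    x r * x r = x 0 * x 0 + ∫ s in 0..r, -2 * (x s * x s + b s * (x s * y s)) := by
  have hf : IntervalIntegrable (fun s ↦ -x s - b s * y s) volume 0 r :=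
    (h.continuousOn_fst.mono (uIcc_subset_Ici_of_le hr)).intervalIntegrable.neg.sub
      (h.intervalIntegrable_mul h.continuousOn_snd hr)
  have hx : ∀ t ∈ uIcc 0 r, x t = x 0 + ∫ s in 0..t, (-x s - b s * y s) :=
    fun t ht ↦ h.fst_eq t (uIcc_subset_Ici_of_le hr ht)
  rw [mul_eq_add_integral_of_eq_add_integral_s19 hf hf hx hx]
  congr 2 with s
  ring

theorem mul_self_snd_eq (h : IsKreinSolutionAtI b x y) (hr : 0 ≤ r) :
    y r * y r = y 0 * y 0 + ∫ s in 0..r, -2 * (b s * (x s * y s)) := by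
  have hg : IntervalIntegrable (fun s ↦ -(b s * x s)) volume 0 r :=
    (h.intervalIntegrable_mul h.continuousOn_fst hr).neg
  have hy : ∀ t ∈ uIcc 0 r, y t = y 0 + ∫ s in 0..t, -(b s * x s) := fun t ht ↦ by
    rw [intervalIntegral.integral_neg, ← sub_eq_add_neg]
    exact h.snd_eq t (uIcc_subset_Ici_of_le hr ht)
  rw [mul_eq_add_integral_of_eq_add_integral_s19 hg hg hy hy]
  congr 2 with s
  ring

theorem intervalIntegrable_mul_self_fst (h : IsKreinSolutionAtI b x y) (hr : 0 ≤ r) :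
    IntervalIntegrable (fun s ↦ x s * x s) volume 0 r :=
  ((h.continuousOn_fst.mul h.continuousOn_fst).mono (uIcc_subset_Ici_of_le hr)).intervalIntegrable

theorem intervalIntegrable_mul_fst_mul_snd (h : IsKreinSolutionAtI b x y) (hr : 0 ≤ r) :
    IntervalIntegrable (fun s ↦ b s * (x s * y s)) volume 0 r :=
  h.intervalIntegrable_mul (h.continuousOn_fst.mul h.continuousOn_snd) hr

theorem mul_self_add_mul_self_le (h : IsKreinSolutionAtI b x y) (hr : 0 ≤ r) :
    x r * x r + y r * y r ≤
      x 0 * x 0 + y 0 * y 0 + ∫ s in 0..r, 2 * |b s| * (x s * x s + y s * y s) := by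
  have hxx := h.intervalIntegrable_mul_self_fst hr
  have hbxy := h.intervalIntegrable_mul_fst_mul_snd hr
  have hφ : ContinuousOn (fun t ↦ x t * x t + y t * y t) (uIcc 0 r) :=
    ((h.continuousOn_fst.mul h.continuousOn_fst).add
      (h.continuousOn_snd.mul h.continuousOn_snd)).mono (uIcc_subset_Ici_of_le hr)
  rw [h.mul_self_fst_eq hr, h.mul_self_snd_eq hr, add_add_add_comm,
    ← intervalIntegral.integral_add ((hxx.add hbxy).const_mul (-2)) (hbxy.const_mul (-2))]
  gcongr
  refine intervalIntegral.integral_mono_on hr (((hxx.add hbxy).const_mul (-2)).add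
    (hbxy.const_mul (-2))) (((h.intervalIntegrable _ hr).abs.const_mul 2).mul_continuousOn hφ)
    fun s _ ↦ ?_
  nlinarith [mul_nonneg (abs_nonneg (b s)) (sq_nonneg (x s + y s)),
    mul_nonneg (abs_nonneg (b s)) (sq_nonneg (x s - y s)), neg_abs_le (b s),
    le_abs_self (b s), mul_self_nonneg (x s)]

theorem eq_zero (h : IsKreinSolutionAtI b x y) (hx₀ : x 0 = 0) (hy₀ : y 0 = 0) (hr : 0 ≤ r) :
    x r = 0 ∧ y r = 0 := by
  have hle : x r * x r + y r * y r ≤ 0 := by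
    refine nonpos_of_le_integral_mul (φ := fun t ↦ x t * x t + y t * y t) hr
      ((h.intervalIntegrable _ hr).abs.const_mul 2)
      (fun s _ ↦ mul_nonneg zero_le_two (abs_nonneg (b s)))
      (((h.continuousOn_fst.mul h.continuousOn_fst).add
        (h.continuousOn_snd.mul h.continuousOn_snd)).mono Icc_subset_Ici_self)
      fun t ht ↦ ?_
    simpa [hx₀, hy₀] using h.mul_self_add_mul_self_le ht.1
  exact mul_self_add_mul_self_eq_zero.mp
    (le_antisymm hle (add_nonneg (mul_self_nonneg _) (mul_self_nonneg _)))

theorem mul_self_snd_sub_mul_self_fst (h : IsKreinSolutionAtI b x y) (hr : 0 ≤ r) :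
    y r * y r - x r * x r = y 0 * y 0 - x 0 * x 0 + ∫ s in 0..r, 2 * (x s * x s) := by
  have hxx := h.intervalIntegrable_mul_self_fst hr
  have hbxy := h.intervalIntegrable_mul_fst_mul_snd hr
  rw [h.mul_self_fst_eq hr, h.mul_self_snd_eq hr, add_sub_add_comm,
    ← intervalIntegral.integral_sub (hbxy.const_mul (-2)) ((hxx.add hbxy).const_mul (-2))]
  congr 2 with s
  ring

theorem mul_self_snd_pos (h : IsKreinSolutionAtI b x y) (hx₀ : x 0 ≠ 0)
    (hxy₀ : x 0 * x 0 ≤ y 0 * y 0) (hr : 0 ≤ r) : 0 < y r * y r := by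
  have hx₀' : 0 < x 0 * x 0 := mul_self_pos.2 hx₀
  have key := h.mul_self_snd_sub_mul_self_fst hr
  rcases hr.eq_or_lt with rfl | hr
  · linarith
  have hint : 0 < ∫ s in 0..r, 2 * (x s * x s) :=
    intervalIntegral.integral_pos hr
      ((continuousOn_const.mul (h.continuousOn_fst.mul h.continuousOn_fst)).mono
        Icc_subset_Ici_self)
      (fun s _ ↦ mul_nonneg zero_le_two (mul_self_nonneg _))
      ⟨0, left_mem_Icc.2 hr.le, mul_pos zero_lt_two hx₀'⟩
  nlinarith [mul_self_nonneg (x r)]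

theorem snd_pos (h : IsKreinSolutionAtI b x y) (hx₀ : x 0 ≠ 0) (hxy₀ : |x 0| ≤ y 0)
    (hr : 0 ≤ r) : 0 < y r := by
  have hxy₀' : x 0 * x 0 ≤ y 0 * y 0 := by
    rw [← abs_mul_abs_self (x 0)]
    exact mul_self_le_mul_self (abs_nonneg _) hxy₀
  by_contra! hyr
  obtain ⟨s, hs, hys⟩ := intermediate_value_Icc' hr (h.continuousOn_snd.mono Icc_subset_Ici_self)
    ⟨hyr, (abs_pos.2 hx₀).trans_le hxy₀ |>.le⟩
  simpa [hys] using h.mul_self_snd_pos hx₀ hxy₀' hs.1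

end IsKreinSolutionAtI

theorem IsKreinSystem.apply_zero {a : ℝ → ℂ} {P Ps : ℝ → ℂ → ℂ} (hK : IsKreinSystem a P Ps)
    (z : ℂ) : P 0 z = 1 ∧ Ps 0 z = 1 := by
  simpa using hK.2.2.2 z 0 le_rfl

open Complex in
theorem IsKreinSystem.isKreinSolutionAtI {a : ℝ → ℂ} {P Ps : ℝ → ℂ → ℂ}
    (hK : IsKreinSystem a P Ps) (ha : ∀ r, (a r).im = 0) (L : ℂ →L[ℝ] ℝ) :
    IsKreinSolutionAtI (fun s ↦ (a s).re) (fun s ↦ L (P s I)) (fun s ↦ L (Ps s I)) := by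
  obtain ⟨haInt, hP, hPs, heq⟩ := id hK
  have hconj (s : ℝ) : (starRingEnd ℂ) (a s) = a s := conj_eq_iff_im.2 (ha s)
  have hL (s : ℝ) (z : ℂ) : L (a s * z) = (a s).re * L z :=
    calc L (a s * z) = L ((a s).re • z) := by rw [real_smul, conj_eq_iff_re.1 (hconj s)]
      _ = (a s).re * L z := L.map_smul _ _
  have haI (r : ℝ) (hr : 0 ≤ r) : IntervalIntegrable a volume 0 r :=
    (intervalIntegrable_iff_integrableOn_Icc_of_le hr).2 <|
      haInt.integrableOn_compact_subset Icc_subset_Ici_self isCompact_Icc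
  refine ⟨fun r hr ↦ ⟨(haI r hr).1.re, (haI r hr).2.re⟩, L.continuous.comp_continuousOn (hP I),
    L.continuous.comp_continuousOn (hPs I), fun r hr ↦ ?_, fun r hr ↦ ?_⟩
  · have hint : IntervalIntegrable (fun s ↦ I * I * P s I - a s * Ps s I) volume 0 r :=
      (((hP I).mono (uIcc_subset_Ici_of_le hr)).intervalIntegrable.const_mul (I * I)).sub
        ((haI r hr).mul_continuousOn ((hPs I).mono (uIcc_subset_Ici_of_le hr)))
    simp only [hconj] at heq
    rw [(heq I r hr).1, (hK.apply_zero I).1, map_add, ← L.intervalIntegral_comp_comm hint]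
    simp [hL]
  · have hint : IntervalIntegrable (fun s ↦ a s * P s I) volume 0 r :=
      (haI r hr).mul_continuousOn ((hP I).mono (uIcc_subset_Ici_of_le hr))
    rw [(heq I r hr).2, (hK.apply_zero I).2, map_sub, ← L.intervalIntegral_comp_comm hint]
    simp [hL]

/-- For a Krein system with a real-valued coefficient, `P_*(r, i)` is a positive real
number for every `r ≥ 0`. -/
theorem krein_Pstar_at_i_pos
    (a : ℝ → ℂ) (P Ps : ℝ → ℂ → ℂ)
    (hK : IsKreinSystem a P Ps)
    (ha : ∀ r : ℝ, (a r).im = 0) :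
    ∀ r : ℝ, 0 ≤ r → (Ps r Complex.I).im = 0 ∧ 0 < (Ps r Complex.I).re := by
  intro r hr
  obtain ⟨hP₀, hPs₀⟩ := hK.apply_zero Complex.I
  refine ⟨((hK.isKreinSolutionAtI ha Complex.imCLM).eq_zero ?_ ?_ hr).2,
    (hK.isKreinSolutionAtI ha Complex.reCLM).snd_pos ?_ ?_ hr⟩ <;> simp [hP₀, hPs₀]

end
end
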